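/- arXiv:1601.03290 — 2 statements merged into one kernel-verified Lean document; each statement's English description precedes it below -/
import Mathlib

section
/- Let A ∈ ℝ^{n×n}, B ∈ ℝ^{n×m}, C ∈ ℝ^{l×n}, D ∈ ℝ^{l×m}, E ∈ ℝ^{n×q}, S ∈ ℝ^{q×q}, S₀ ∈ ℝ^{n₀×n₀}, F₀ ∈ ℝ^{l×n₀}. Suppose X₁, U₁ satisfy X₁S = AX₁ + BU₁ + E and 0 = CX₁ + DU₁, and X₂, U₂ satisfy X₂S₀ = AX₂ + BU₂ and 0 = CX₂ + DU₂ − F₀. Let K₁ be such that A + BK₁ is Hurwitz, K₂ = U₁ − K₁X₁, K₃ = U₂ − K₁X₂, and let L₁ ∈ ℝ^{n×l}, L₂ ∈ ℝ^{q×l} be such that the block matrix A_c = [[A + L₁C, E],[L₂C, S]] is Hurwitz. Let x, d, r, ξ, ζ be differentiable with d' = S d, r' = S₀ r, x' = A x + B u + E d, y = C x + D u, ξ' = A ξ + E ζ + B u − L₁(y − ŷ), ζ' = S ζ − L₂(y − ŷ), ŷ = C ξ + D u, and u = K₁ξ + K₂ζ + K₃η, where η : [0,∞) → ℝ^{n₀}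 satisfies ‖η(t) − r(t)‖ ≤ c·e^{−λt} for some constants c > 0, λ > 0. Then e(t) = y(t) − F₀ r(t) → 0 as t → ∞ for every initial condition. -/
open Matrix Filter

/-- A real square matrix is Hurwitz if every eigenvalue of it, regarded as a
complex matrix, has strictly negative real part. -/
def IsHurwitz {ι : Type*} [Fintype ι] [DecidableEq ι] (M : Matrix ι ι ℝ) : Prop :=
  ∀ μ ∈ spectrum ℂ (M.map Complex.ofReal), μ.re < 0

/-!
The observer error `(ξ - x, ζ - d)` solves the autonomous system with the Hurwitz matrix `A_c`,
so it tends to zero. Then `z = x - X₁ d - X₂ r` solves `z' = (A + B K₁) z + B G` with an input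
`G` that tends to zero, and the tracking error equals `(C + D K₁) z + D G`.

That a Hurwitz system driven by a vanishing input has a vanishing state is shown without matrix
exponentials: over `ℂ` the characteristic polynomial factors as `∏ (X - μᵢ)` and annihilates the
matrix, and peeling off one factor at a time reduces everything to the scalar equation
`w' = μ w + g`, for which `e^{-μ t} w` has derivative of norm at most `‖g‖ e^{-Re μ t}`.
-/

open Topology

section ScalarDecay

variable {E : Type*} [NormedAddCommGroup E] [NormedSpace ℂ E]

lemma norm_le_of_hasDerivAt_smul_add {μ : ℂ} (hμ : μ.re < 0) {v g : ℝ → E}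
    (hv : ∀ t, HasDerivAt v (μ • v t + g t) t) {T δ : ℝ} (hg : ∀ s ≥ T, ‖g s‖ ≤ δ)
    {t : ℝ} (ht : T ≤ t) :
    ‖v t‖ ≤ Real.exp (μ.re * (t - T)) * ‖v T‖ + δ / -μ.re := by
  set α := -μ.re with hα_def
  have hα : 0 < α := neg_pos.2 hμ
  have hδ : 0 ≤ δ := (norm_nonneg _).trans (hg T le_rfl)
  -- `w s = e^{-μ (s - T)} v s` has derivative `e^{-μ (s - T)} g s`, of norm at most
  -- `δ e^{α (s - T)}`, the derivative of the comparison function in `hB`.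
  set w : ℝ → E := fun s => Complex.exp (-μ * ((s - T : ℝ) : ℂ)) • v s
  have norm_w : ∀ s, ‖w s‖ = Real.exp (α * (s - T)) * ‖v s‖ := fun s => by
    simp [w, norm_smul, Complex.norm_exp, α]
  have hw : ∀ s, HasDerivAt w (Complex.exp (-μ * ((s - T : ℝ) : ℂ)) • g s) s := fun s => by
    have hexp := (((hasDerivAt_id s).sub_const T).ofReal_comp.const_mul (-μ)).cexp
    refine (hexp.smul (hv s)).congr_deriv ?_
    simp only [id, Complex.ofReal_one, mul_one, smul_add, smul_smul]
    rw [mul_neg, neg_smul]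
    abel
  have hB : ∀ s, HasDerivAt (fun s => ‖v T‖ + δ / α * (Real.exp (α * (s - T)) - 1))
      (δ * Real.exp (α * (s - T))) s := fun s => by
    have := ((((hasDerivAt_id s).sub_const T).const_mul α).exp.sub_const 1).const_mul (δ / α)
      |>.const_add ‖v T‖
    refine this.congr_deriv ?_
    simp only [id]
    field_simp
  have hw_le : ∀ s ≥ T, ‖Complex.exp (-μ * ((s - T : ℝ) : ℂ)) • g s‖ ≤
      δ * Real.exp (α * (s - T)) := fun s hs => by
    have hre : (-μ * ((s - T : ℝ) : ℂ)).re = α * (s - T) := by simp [α]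
    rw [norm_smul, Complex.norm_exp, hre, mul_comm δ]
    exact mul_le_mul_of_nonneg_left (hg s hs) (Real.exp_pos _).le
  have hbound : ‖w t‖ ≤ ‖v T‖ + δ / α * (Real.exp (α * (t - T)) - 1) :=
    image_norm_le_of_norm_deriv_right_le_deriv_boundary
      (fun s _ => (hw s).continuousAt.continuousWithinAt) (fun s _ => (hw s).hasDerivWithinAt)
      (by simp [norm_w]) hB (fun s hs => hw_le s hs.1) ⟨ht, le_rfl⟩
  rw [norm_w] at hbound
  have hexp : Real.exp (μ.re * (t - T)) * Real.exp (α * (t - T)) = 1 := by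
    rw [← Real.exp_add, hα_def]; simp
  calc ‖v t‖ = Real.exp (μ.re * (t - T)) * (Real.exp (α * (t - T)) * ‖v t‖) := by
        rw [← mul_assoc, hexp, one_mul]
    _ ≤ Real.exp (μ.re * (t - T)) * (‖v T‖ + δ / α * (Real.exp (α * (t - T)) - 1)) := by
        gcongr
    _ ≤ Real.exp (μ.re * (t - T)) * ‖v T‖ + δ / α := by
        rw [mul_add, mul_left_comm, mul_sub_one, hexp]
        have := Real.exp_pos (μ.re * (t - T))
        have : 0 ≤ δ / α := by positivity
        nlinarith

theorem tendsto_zero_of_hasDerivAt_smul_add {μ : ℂ} (hμ : μ.re < 0) {v g : ℝ → E}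
    (hv : ∀ t, HasDerivAt v (μ • v t + g t) t) (hg : Tendsto g atTop (𝓝 0)) :
    Tendsto v atTop (𝓝 0) := by
  rw [NormedAddGroup.tendsto_nhds_zero] at hg ⊢
  intro ε hε
  have hα : 0 < -μ.re := neg_pos.2 hμ
  obtain ⟨T, hT⟩ := eventually_atTop.1 (hg (-μ.re * (ε / 2)) (by positivity))
  have htransient : Tendsto (fun t => Real.exp (μ.re * (t - T)) * ‖v T‖) atTop (𝓝 0) := by
    have hlin := (tendsto_id.atTop_add (tendsto_const_nhds (x := -T))).const_mul_atTop_of_neg hμ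
    simpa [sub_eq_add_neg] using (Real.tendsto_exp_atBot.comp hlin).mul_const ‖v T‖
  filter_upwards [htransient.eventually_lt_const (half_pos hε), eventually_ge_atTop T]
    with t hsmall hTt
  calc ‖v t‖ ≤ Real.exp (μ.re * (t - T)) * ‖v T‖ + -μ.re * (ε / 2) / -μ.re :=
        norm_le_of_hasDerivAt_smul_add hμ hv (fun s hs => (hT s hs).le) hTt
    _ < ε := by rw [mul_div_cancel_left₀ _ hα.ne']; linarith

end ScalarDecay

section MatrixMulVec

variable {R α m n : Type*} [Fintype n]

lemma Filter.Tendsto.matrix_mulVec_zero [NonUnitalNonAssocSemiring R] [TopologicalSpace R]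
    [IsTopologicalSemiring R] (M : Matrix m n R) {l : Filter α} {v : α → n → R}
    (hv : Tendsto v l (𝓝 0)) : Tendsto (fun a => M *ᵥ v a) l (𝓝 0) := by
  simpa [Function.comp_def] using
    ((continuous_const.matrix_mulVec continuous_id).tendsto (0 : n → R)).comp hv

lemma HasDerivAt.matrix_mulVec {𝕜 : Type*} [NontriviallyNormedField 𝕜] [NormedAlgebra ℝ 𝕜]
    (M : Matrix m n 𝕜) {v : ℝ → n → 𝕜} {v' : n → 𝕜} {t : ℝ}
    (hv : HasDerivAt v v' t) : HasDerivAt (fun t => M *ᵥ v t) (M *ᵥ v') t := by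
  rw [hasDerivAt_pi] at hv ⊢
  intro i
  simp only [mulVec, dotProduct]
  exact HasDerivAt.fun_sum fun j _ => (hv j).const_mul (M i j)

end MatrixMulVec

section Polynomial

open Polynomial

theorem Matrix.tendsto_zero_of_tendsto_aeval_mulVec {ι : Type*} [Fintype ι] [DecidableEq ι]
    (M : Matrix ι ι ℂ) {v f : ℝ → ι → ℂ}
    (hv : ∀ t, HasDerivAt v (M *ᵥ v t + f t) t) (hf : Tendsto f atTop (𝓝 0))
    (s : Multiset ℂ) (hs : ∀ μ ∈ s, μ.re < 0)
    (hp : Tendsto (fun t => aeval M (s.map fun μ => X - C μ).prod *ᵥ v t) atTop (𝓝 0)) :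
    Tendsto v atTop (𝓝 0) := by
  induction s using Multiset.induction_on with
  | empty => simpa using hp
  | cons μ s ih =>
    set N := aeval M (s.map fun μ => X - C μ).prod
    have hNM : N * M = M * N := by
      simpa [N] using ((commute_X (s.map fun μ => X - C μ).prod).map (aeval M)).eq.symm
    -- `w = N v` solves `w' = μ w + g`, where `g = (M - μ) N v + N f` tends to zero
    -- because `(M - μ) N` is `aeval M` of the whole product.
    have hw : ∀ t, HasDerivAt (fun t => N *ᵥ v t)
        (μ • (N *ᵥ v t) + ((M - μ • 1) *ᵥ (N *ᵥ v t) + N *ᵥ f t)) t := fun t => by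
      refine ((hv t).matrix_mulVec N).congr_deriv ?_
      rw [mulVec_add, mulVec_mulVec, hNM, ← mulVec_mulVec, sub_mulVec, smul_mulVec, one_mulVec]
      abel
    have hg : Tendsto (fun t => (M - μ • 1) *ᵥ (N *ᵥ v t) + N *ᵥ f t) atTop (𝓝 0) := by
      have hfirst : ∀ t, aeval M ((μ ::ₘ s).map fun μ => X - C μ).prod *ᵥ v t =
          (M - μ • 1) *ᵥ (N *ᵥ v t) := fun t => by
        rw [Multiset.map_cons, Multiset.prod_cons, map_mul, mulVec_mulVec, map_sub, aeval_X,
          aeval_C, Algebra.algebraMap_eq_smul_one]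
      simpa using (hp.congr hfirst).add (hf.matrix_mulVec_zero N)
    exact ih (fun μ' hμ' => hs μ' (Multiset.mem_cons_of_mem hμ'))
      (tendsto_zero_of_hasDerivAt_smul_add (hs μ (Multiset.mem_cons_self μ s)) hw hg)

theorem IsHurwitz.tendsto_zero_of_hasDerivAt {ι : Type*} [Fintype ι] [DecidableEq ι]
    {M : Matrix ι ι ℝ} (hM : IsHurwitz M) {v f : ℝ → ι → ℝ}
    (hv : ∀ t, HasDerivAt v (M *ᵥ v t + f t) t) (hf : Tendsto f atTop (𝓝 0)) :
    Tendsto v atTop (𝓝 0) := by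
  set Mc := M.map Complex.ofReal
  let toComplex : (ι → ℝ) →L[ℝ] (ι → ℂ) :=
    ContinuousLinearMap.pi fun i => Complex.ofRealCLM.comp (ContinuousLinearMap.proj i)
  have hmap : ∀ w, toComplex (M *ᵥ w) = Mc *ᵥ toComplex w := fun w =>
    funext fun i => RingHom.map_mulVec Complex.ofRealHom M w i
  have hvc : ∀ t, HasDerivAt (fun t => toComplex (v t))
      (Mc *ᵥ toComplex (v t) + toComplex (f t)) t := fun t => by
    simpa [hmap, Function.comp_def] using toComplex.hasFDerivAt.comp_hasDerivAt t (hv t)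
  have hfc : Tendsto (fun t => toComplex (f t)) atTop (𝓝 0) := by
    simpa [Function.comp_def] using (toComplex.continuous.tendsto 0).comp hf
  have hroots : ∀ μ ∈ Mc.charpoly.roots, μ.re < 0 := fun μ hμ =>
    hM μ (Matrix.mem_spectrum_of_isRoot_charpoly (isRoot_of_mem_roots hμ))
  have hcharpoly : (Mc.charpoly.roots.map fun μ => X - C μ).prod = Mc.charpoly :=
    ((IsAlgClosed.splits _).eq_prod_roots_of_monic Mc.charpoly_monic).symm
  have hvc0 := Mc.tendsto_zero_of_tendsto_aeval_mulVec hvc hfc _ hroots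
    (by simp [hcharpoly, aeval_self_charpoly])
  rw [tendsto_pi_nhds] at hvc0 ⊢
  intro i
  simpa [toComplex, Function.comp_def] using (Complex.continuous_re.tendsto 0).comp (hvc0 i)

end Polynomial

lemma HasDerivAt.sum_elim {F ι κ : Type*} [NormedAddCommGroup F] [NormedSpace ℝ F]
    {a : ℝ → ι → F} {b : ℝ → κ → F} {a' : ι → F} {b' : κ → F} {t : ℝ}
    (ha : HasDerivAt a a' t) (hb : HasDerivAt b b' t) :
    HasDerivAt (fun t => Sum.elim (a t) (b t)) (Sum.elim a' b') t := by
  rw [hasDerivAt_pi] at ha hb ⊢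
  rintro (i | i)
  exacts [ha i, hb i]

lemma tendsto_sum_elim_nhds_zero_iff {F ι κ α : Type*} [TopologicalSpace F] [Zero F]
    {l : Filter α} {a : α → ι → F} {b : α → κ → F} :
    Tendsto (fun x => Sum.elim (a x) (b x)) l (𝓝 0) ↔ Tendsto a l (𝓝 0) ∧ Tendsto b l (𝓝 0) := by
  simp only [tendsto_pi_nhds, Sum.forall, Sum.elim_inl, Sum.elim_inr, Pi.zero_apply]

theorem tendsto_observer_error {ι κ o : Type*} [Fintype ι] [Fintype κ] [Fintype o]
    [DecidableEq ι] [DecidableEq κ] {A : Matrix ι ι ℝ} {C : Matrix o ι ℝ} {E : Matrix ι κ ℝ}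
    {S : Matrix κ κ ℝ} {L₁ : Matrix ι o ℝ} {L₂ : Matrix κ o ℝ}
    (hAc : IsHurwitz (fromBlocks (A + L₁ * C) E (L₂ * C) S))
    {x ξ p : ℝ → ι → ℝ} {d ζ : ℝ → κ → ℝ} {e : ℝ → o → ℝ}
    (hd : ∀ t, HasDerivAt d (S *ᵥ d t) t)
    (hx : ∀ t, HasDerivAt x (A *ᵥ x t + p t + E *ᵥ d t) t)
    (hξ : ∀ t, HasDerivAt ξ (A *ᵥ ξ t + E *ᵥ ζ t + p t - L₁ *ᵥ e t) t)
    (hζ : ∀ t, HasDerivAt ζ (S *ᵥ ζ t - L₂ *ᵥ e t) t)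
    (he : ∀ t, e t = C *ᵥ x t - C *ᵥ ξ t) :
    Tendsto (fun t => ξ t - x t) atTop (𝓝 0) ∧ Tendsto (fun t => ζ t - d t) atTop (𝓝 0) := by
  have hderiv : ∀ t, HasDerivAt (fun t => Sum.elim (ξ t - x t) (ζ t - d t))
      (fromBlocks (A + L₁ * C) E (L₂ * C) S *ᵥ Sum.elim (ξ t - x t) (ζ t - d t) + 0) t :=
    fun t => by
      refine (((hξ t).sub (hx t)).sum_elim ((hζ t).sub (hd t))).congr_deriv ?_
      rw [fromBlocks_mulVec, add_zero, Sum.elim_comp_inl, Sum.elim_comp_inr, he]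
      congr 1 <;> simp only [add_mulVec, mulVec_sub, ← mulVec_mulVec] <;> abel
  exact tendsto_sum_elim_nhds_zero_iff.1 (hAc.tendsto_zero_of_hasDerivAt hderiv tendsto_const_nhds)

theorem stmt10_general {n m l q n₀ : ℕ}
    (A : Matrix (Fin n) (Fin n) ℝ) (B : Matrix (Fin n) (Fin m) ℝ)
    (C : Matrix (Fin l) (Fin n) ℝ) (D : Matrix (Fin l) (Fin m) ℝ)
    (E : Matrix (Fin n) (Fin q) ℝ) (S : Matrix (Fin q) (Fin q) ℝ)
    (S₀ : Matrix (Fin n₀) (Fin n₀) ℝ) (F₀ : Matrix (Fin l) (Fin n₀) ℝ)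
    (X₁ : Matrix (Fin n) (Fin q) ℝ) (U₁ : Matrix (Fin m) (Fin q) ℝ)
    (hreg11 : X₁ * S = A * X₁ + B * U₁ + E)
    (hreg12 : C * X₁ + D * U₁ = 0)
    (X₂ : Matrix (Fin n) (Fin n₀) ℝ) (U₂ : Matrix (Fin m) (Fin n₀) ℝ)
    (hreg21 : X₂ * S₀ = A * X₂ + B * U₂)
    (hreg22 : C * X₂ + D * U₂ = F₀)
    (K₁ : Matrix (Fin m) (Fin n) ℝ) (hK₁ : IsHurwitz (A + B * K₁))
    (K₂ : Matrix (Fin m) (Fin q) ℝ) (hK₂ : K₂ = U₁ - K₁ * X₁)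
    (K₃ : Matrix (Fin m) (Fin n₀) ℝ) (hK₃ : K₃ = U₂ - K₁ * X₂)
    (L₁ : Matrix (Fin n) (Fin l) ℝ) (L₂ : Matrix (Fin q) (Fin l) ℝ)
    (hAc : IsHurwitz (Matrix.fromBlocks (A + L₁ * C) E (L₂ * C) S))
    (x : ℝ → Fin n → ℝ) (d : ℝ → Fin q → ℝ) (r : ℝ → Fin n₀ → ℝ)
    (ξ : ℝ → Fin n → ℝ) (ζ : ℝ → Fin q → ℝ)
    (u : ℝ → Fin m → ℝ) (y yhat : ℝ → Fin l → ℝ)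
    (η : ℝ → Fin n₀ → ℝ) (c lam : ℝ) (hlam : 0 < lam)
    (hη : ∀ t ≥ (0:ℝ), ‖η t - r t‖ ≤ c * Real.exp (-lam * t))
    (hd : ∀ t, HasDerivAt d (S.mulVec (d t)) t)
    (hr : ∀ t, HasDerivAt r (S₀.mulVec (r t)) t)
    (hx : ∀ t, HasDerivAt x (A.mulVec (x t) + B.mulVec (u t) + E.mulVec (d t)) t)
    (hy : ∀ t, y t = C.mulVec (x t) + D.mulVec (u t))
    (hyhat : ∀ t, yhat t = C.mulVec (ξ t) + D.mulVec (u t))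
    (hξ : ∀ t, HasDerivAt ξ
      (A.mulVec (ξ t) + E.mulVec (ζ t) + B.mulVec (u t) - L₁.mulVec (y t - yhat t)) t)
    (hζ : ∀ t, HasDerivAt ζ (S.mulVec (ζ t) - L₂.mulVec (y t - yhat t)) t)
    (hu : ∀ t, u t = K₁.mulVec (ξ t) + K₂.mulVec (ζ t) + K₃.mulVec (η t)) :
    Tendsto (fun t => y t - F₀.mulVec (r t)) atTop (nhds 0) := by
  obtain ⟨hξx, hζd⟩ := tendsto_observer_error hAc hd hx hξ hζ
    fun t => by rw [hy, hyhat, add_sub_add_right_eq_sub]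
  have hηr : Tendsto (fun t => η t - r t) atTop (𝓝 0) :=
    squeeze_zero_norm' ((eventually_ge_atTop 0).mono hη) <| by
      simpa using (Real.tendsto_exp_atBot.comp
        (tendsto_id.const_mul_atTop_of_neg (neg_neg_of_pos hlam))).const_mul c
  set G := fun t => K₁ *ᵥ (ξ t - x t) + K₂ *ᵥ (ζ t - d t) + K₃ *ᵥ (η t - r t)
  have hG : Tendsto G atTop (𝓝 0) := by
    simpa using ((hξx.matrix_mulVec_zero K₁).add (hζd.matrix_mulVec_zero K₂)).add
      (hηr.matrix_mulVec_zero K₃)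
  -- `X₁ d + X₂ r` is the steady state of `x` dictated by the regulator equations.
  set z := fun t => x t - X₁ *ᵥ d t - X₂ *ᵥ r t
  have hz' : ∀ t, HasDerivAt z ((A + B * K₁) *ᵥ z t + B *ᵥ G t) t := fun t => by
    refine (((hx t).sub ((hd t).matrix_mulVec X₁)).sub ((hr t).matrix_mulVec X₂)).congr_deriv ?_
    rw [hu t, mulVec_mulVec, mulVec_mulVec, hreg11, hreg21]
    simp only [z, G, hK₂, hK₃, add_mulVec, sub_mulVec, mulVec_add, mulVec_sub, ← mulVec_mulVec]
    abel
  have hz := hK₁.tendsto_zero_of_hasDerivAt hz' (hG.matrix_mulVec_zero B)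
  have hout : ∀ t, y t - F₀ *ᵥ r t = (C + D * K₁) *ᵥ z t + D *ᵥ G t := fun t => by
    have hCX₁ : C *ᵥ (X₁ *ᵥ d t) = -(D *ᵥ (U₁ *ᵥ d t)) := by
      rw [mulVec_mulVec, mulVec_mulVec, eq_neg_of_add_eq_zero_left hreg12, neg_mulVec]
    rw [hy t, hu t, ← hreg22]
    simp only [z, G, hK₂, hK₃, add_mulVec, sub_mulVec, mulVec_add, mulVec_sub, ← mulVec_mulVec,
      hCX₁]
    abel
  simpa [hout] using (hz.matrix_mulVec_zero _).add (hG.matrix_mulVec_zero D)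

theorem stmt10 {n m l q n₀ : ℕ}
    (A : Matrix (Fin n) (Fin n) ℝ) (B : Matrix (Fin n) (Fin m) ℝ)
    (C : Matrix (Fin l) (Fin n) ℝ) (D : Matrix (Fin l) (Fin m) ℝ)
    (E : Matrix (Fin n) (Fin q) ℝ) (S : Matrix (Fin q) (Fin q) ℝ)
    (S₀ : Matrix (Fin n₀) (Fin n₀) ℝ) (F₀ : Matrix (Fin l) (Fin n₀) ℝ)
    (X₁ : Matrix (Fin n) (Fin q) ℝ) (U₁ : Matrix (Fin m) (Fin q) ℝ)
    (hreg11 : X₁ * S = A * X₁ + B * U₁ + E)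
    (hreg12 : C * X₁ + D * U₁ = 0)
    (X₂ : Matrix (Fin n) (Fin n₀) ℝ) (U₂ : Matrix (Fin m) (Fin n₀) ℝ)
    (hreg21 : X₂ * S₀ = A * X₂ + B * U₂)
    (hreg22 : C * X₂ + D * U₂ = F₀)
    (K₁ : Matrix (Fin m) (Fin n) ℝ) (hK₁ : IsHurwitz (A + B * K₁))
    (K₂ : Matrix (Fin m) (Fin q) ℝ) (hK₂ : K₂ = U₁ - K₁ * X₁)
    (K₃ : Matrix (Fin m) (Fin n₀) ℝ) (hK₃ : K₃ = U₂ - K₁ * X₂)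
    (L₁ : Matrix (Fin n) (Fin l) ℝ) (L₂ : Matrix (Fin q) (Fin l) ℝ)
    (hAc : IsHurwitz (Matrix.fromBlocks (A + L₁ * C) E (L₂ * C) S))
    (x : ℝ → Fin n → ℝ) (d : ℝ → Fin q → ℝ) (r : ℝ → Fin n₀ → ℝ)
    (ξ : ℝ → Fin n → ℝ) (ζ : ℝ → Fin q → ℝ)
    (u : ℝ → Fin m → ℝ) (y yhat : ℝ → Fin l → ℝ)
    (η : ℝ → Fin n₀ → ℝ) (c lam : ℝ) (hc : 0 < c) (hlam : 0 < lam)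
    (hη : ∀ t ≥ (0:ℝ), ‖η t - r t‖ ≤ c * Real.exp (-lam * t))
    (hd : ∀ t, HasDerivAt d (S.mulVec (d t)) t)
    (hr : ∀ t, HasDerivAt r (S₀.mulVec (r t)) t)
    (hx : ∀ t, HasDerivAt x (A.mulVec (x t) + B.mulVec (u t) + E.mulVec (d t)) t)
    (hy : ∀ t, y t = C.mulVec (x t) + D.mulVec (u t))
    (hyhat : ∀ t, yhat t = C.mulVec (ξ t) + D.mulVec (u t))
    (hξ : ∀ t, HasDerivAt ξ
      (A.mulVec (ξ t) + E.mulVec (ζ t) + B.mulVec (u t) - L₁.mulVec (y t - yhat t)) t)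
    (hζ : ∀ t, HasDerivAt ζ (S.mulVec (ζ t) - L₂.mulVec (y t - yhat t)) t)
    (hu : ∀ t, u t = K₁.mulVec (ξ t) + K₂.mulVec (ζ t) + K₃.mulVec (η t)) :
    Tendsto (fun t => y t - F₀.mulVec (r t)) atTop (nhds 0) :=
  stmt10_general A B C D E S S₀ F₀ X₁ U₁ hreg11 hreg12 X₂ U₂ hreg21 hreg22 K₁ hK₁ K₂ hK₂ K₃ hK₃ L₁
    L₂ hAc x d r ξ ζ u y yhat η c lam hlam hη hd hr hx hy hyhat hξ hζ hu
end

section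
/- Let A ∈ ℝ^{n×n}, B ∈ ℝ^{n×m}, E ∈ ℝ^{n×q}, S ∈ ℝ^{q×q}, L ∈ ℝ^{q×n}. Let x, d, ζ be differentiable functions and u any function such that x' = A x + B u + E d, d' = S d, and ζ' = (S + LE)ζ + (LA − SL − LEL)x + LBu. Then the reduced-order estimation error d̂ := ζ − Lx − d satisfies d̂'(t) = (S + LE) d̂(t) for all t. -/
/-!
Differentiating `ζ - L x - d` and substituting the three dynamics, the input `u` enters only
through `L B u`, once from `ζ'` and once from `L x'`, and cancels. The gain terms `-S L - L E L`
in the observer are chosen so that the remaining `x`- and `d`-terms regroup as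
`(S + L E)(-L x - d)`, which together with `(S + L E) ζ` is `(S + L E)` applied to the error.
-/

open Matrix

theorem HasDerivAt.matrix_mulVec_s12 {𝕜 : Type*} [NontriviallyNormedField 𝕜]
    {ι κ : Type*} [Fintype ι] [Fintype κ] (M : Matrix ι κ 𝕜)
    {f : 𝕜 → κ → 𝕜} {f' : κ → 𝕜} {t : 𝕜} (hf : HasDerivAt f f' t) :
    HasDerivAt (fun s => M *ᵥ f s) (M *ᵥ f') t := by
  refine hasDerivAt_pi.2 fun i => ?_
  simp only [mulVec, dotProduct]
  exact HasDerivAt.fun_sum fun j _ => (hasDerivAt_pi.1 hf j).const_mul (M i j)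

theorem Matrix.observerError_mulVec_identity {R : Type*} [Ring R]
    {ι κ μ : Type*} [Fintype ι] [Fintype κ] [Fintype μ]
    (A : Matrix ι ι R) (B : Matrix ι μ R) (E : Matrix ι κ R) (S : Matrix κ κ R)
    (L : Matrix κ ι R) (x : ι → R) (u : μ → R) (d ζ : κ → R) :
    (S + L * E) *ᵥ ζ + (L * A - S * L - L * E * L) *ᵥ x + (L * B) *ᵥ u
        - L *ᵥ (A *ᵥ x + B *ᵥ u + E *ᵥ d) - S *ᵥ d
      = (S + L * E) *ᵥ (ζ - L *ᵥ x - d) := by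
  simp only [mulVec_add, mulVec_sub, add_mulVec, sub_mulVec, mulVec_mulVec, Matrix.add_mul,
    Matrix.mul_assoc]
  abel

theorem stmt12 {n m q : ℕ}
    (A : Matrix (Fin n) (Fin n) ℝ) (B : Matrix (Fin n) (Fin m) ℝ)
    (E : Matrix (Fin n) (Fin q) ℝ) (S : Matrix (Fin q) (Fin q) ℝ)
    (L : Matrix (Fin q) (Fin n) ℝ)
    (x : ℝ → Fin n → ℝ) (d : ℝ → Fin q → ℝ) (ζ : ℝ → Fin q → ℝ)
    (u : ℝ → Fin m → ℝ)
    (hx : ∀ t, HasDerivAt x (A.mulVec (x t) + B.mulVec (u t) + E.mulVec (d t)) t)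
    (hd : ∀ t, HasDerivAt d (S.mulVec (d t)) t)
    (hζ : ∀ t, HasDerivAt ζ
      ((S + L * E).mulVec (ζ t) + (L * A - S * L - L * E * L).mulVec (x t)
        + (L * B).mulVec (u t)) t) :
    ∀ t, HasDerivAt (fun s => ζ s - L.mulVec (x s) - d s)
      ((S + L * E).mulVec (ζ t - L.mulVec (x t) - d t)) t := fun t =>
  (((hζ t).sub ((hx t).matrix_mulVec_s12 L)).sub (hd t)).congr_deriv
    (observerError_mulVec_identity A B E S L (x t) (u t) (d t) (ζ t))
end
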